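/- arXiv:2111.06239 — 2 statements merged into one kernel-verified Lean document; each statement's English description precedes it below -/
import Mathlib

section
/- Let ω ⊆ ℝ² be a bounded measurable set. Let η : ℝ × ℝ² → ℝ and g : ℝ × ℝ² × ℝ → ℝ be continuous functions which are continuously differentiable in the time variable t, and assume that η, ∂_t η, g and ∂_t g are bounded. Define F(t) = ∫_ω ( ∫_0^{η(t,x')} g(t, x', z) dz ) dx'. Then F is differentiable on ℝ and for every t, F'(t) = ∫_ω ( ∫_0^{η(t,x')} ∂_t g(t, x', z) dz ) dx' + ∫_ω ∂_t η(t,x') · g(t, x', η(t,x')) dx'. -/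
/-!
For fixed `x'`, the function `Φ(s, b) = ∫_0^b g(s, x', z) dz` has the continuous partial
derivatives `∫_0^b ∂_t g(s, x', z) dz` and `g(s, x', b)`, so it is `C¹`, and the chain rule along
`t ↦ (t, η(t, x'))` gives the derivative of the inner integral. The uniform bounds on `η`, `∂_t η`,
`g`, `∂_t g` bound this derivative uniformly in `x'`, so dominated convergence allows
differentiating under `∫_ω`, a set of finite measure.
-/

open MeasureTheory ContinuousLinearMap

section Leibniz

variable {E : Type*} [NormedAddCommGroup E] [NormedSpace ℝ E]
  {f f' : ℝ → ℝ → E}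

theorem hasDerivAt_intervalIntegral_of_continuous_deriv (hf : Continuous ↿f)
    (hf' : Continuous ↿f') (hderiv : ∀ t z, HasDerivAt (f · z) (f' t z) t) (a b t₀ : ℝ) :
    HasDerivAt (fun t => ∫ z in a..b, f t z) (∫ z in a..b, f' t₀ z) t₀ := by
  obtain ⟨C, hC⟩ := ((isCompact_closedBall t₀ 1).prod
    (isCompact_uIcc (a := a) (b := b))).exists_bound_of_continuousOn hf'.continuousOn
  have hslice {F : ℝ → ℝ → E} (hF : Continuous ↿F) (t : ℝ) : Continuous (F t) :=
    hF.comp (.prodMk_right t)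
  refine (intervalIntegral.hasDerivAt_integral_of_dominated_loc_of_deriv_le
    (bound := fun _ => C) (Metric.closedBall_mem_nhds t₀ one_pos)
    (.of_forall fun t => (hslice hf t).aestronglyMeasurable)
    ((hslice hf t₀).intervalIntegrable a b) (hslice hf' t₀).aestronglyMeasurable
    (.of_forall fun z hz t ht => hC (t, z) ⟨ht, Set.uIoc_subset_uIcc hz⟩)
    intervalIntegrable_const (.of_forall fun z _ t _ => hderiv t z)).2

theorem hasStrictFDerivAt_intervalIntegral_upper [CompleteSpace E] (hf : Continuous ↿f)
    (hf' : Continuous ↿f') (hderiv : ∀ t z, HasDerivAt (f · z) (f' t z) t) (a : ℝ)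
    (p : ℝ × ℝ) :
    HasStrictFDerivAt (fun q : ℝ × ℝ => ∫ z in a..q.2, f q.1 z)
      ((toSpanSingleton ℝ (∫ z in a..p.2, f' p.1 z)).coprod (toSpanSingleton ℝ (f p.1 p.2)))
      p :=
  have hslice (s : ℝ) : Continuous (f s) := hf.comp (.prodMk_right s)
  hasStrictFDerivAt_uncurry_coprod (f := fun s b => ∫ z in a..b, f s z)
    (f₁ := fun s b => toSpanSingleton ℝ (∫ z in a..b, f' s z))
    (f₂ := fun s b => toSpanSingleton ℝ (f s b)) (u := p)
    (.of_forall fun q =>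
      (hasDerivAt_intervalIntegral_of_continuous_deriv hf hf' hderiv a q.2 q.1).hasFDerivAt)
    (.of_forall fun q => (intervalIntegral.integral_hasDerivAt_right
      ((hslice q.1).intervalIntegrable _ _)
      (hslice q.1).aestronglyMeasurable.stronglyMeasurableAtFilter
      (hslice q.1).continuousAt).hasFDerivAt)
    ((toSpanSingletonCLE (𝕜 := ℝ) (E := E)).continuous.comp
      (intervalIntegral.continuous_parametric_primitive_of_continuous (a₀ := a) hf')).continuousAt
    ((toSpanSingletonCLE (𝕜 := ℝ) (E := E)).continuous.comp hf).continuousAt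

theorem HasDerivAt.intervalIntegral_upper_of_continuous_deriv [CompleteSpace E] {e : ℝ → ℝ}
    {e' t₀ : ℝ} (he : HasDerivAt e e' t₀) (hf : Continuous ↿f) (hf' : Continuous ↿f')
    (hderiv : ∀ t z, HasDerivAt (f · z) (f' t z) t) (a : ℝ) :
    HasDerivAt (fun t => ∫ z in a..e t, f t z)
      ((∫ z in a..e t₀, f' t₀ z) + e' • f t₀ (e t₀)) t₀ := by
  refine ((hasStrictFDerivAt_intervalIntegral_upper hf hf' hderiv a (t₀, e t₀)).hasFDerivAt
    |>.comp_hasDerivAt t₀ ((hasDerivAt_id t₀).prodMk he)).congr_deriv ?_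
  simp

theorem norm_intervalIntegral_zero_le {g : ℝ → E} {b B C : ℝ} (hg : ∀ z, ‖g z‖ ≤ C)
    (hb : |b| ≤ B) : ‖∫ z in (0 : ℝ)..b, g z‖ ≤ C * B := by
  calc ‖∫ z in (0 : ℝ)..b, g z‖ ≤ C * |b - 0| :=
        intervalIntegral.norm_integral_le_of_norm_le_const fun z _ => hg z
    _ ≤ C * B := by
        rw [sub_zero]; exact mul_le_mul_of_nonneg_left hb ((norm_nonneg _).trans (hg 0))

end Leibniz

theorem hasDerivAt_integral_of_continuous_of_bounded {X E : Type*} [TopologicalSpace X]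
    [MeasurableSpace X] [OpensMeasurableSpace X] [NormedAddCommGroup E] [NormedSpace ℝ E]
    [SecondCountableTopologyEither X E] (μ : Measure X) [IsFiniteMeasure μ] {F F' : ℝ → X → E}
    {t₀ C C' : ℝ} (hF : ∀ t, Continuous (F t)) (hF' : Continuous (F' t₀))
    (hFC : ∀ x, ‖F t₀ x‖ ≤ C) (hF'C : ∀ t x, ‖F' t x‖ ≤ C')
    (hderiv : ∀ t x, HasDerivAt (F · x) (F' t x) t) :
    HasDerivAt (fun t => ∫ x, F t x ∂μ) (∫ x, F' t₀ x ∂μ) t₀ :=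
  (hasDerivAt_integral_of_dominated_loc_of_deriv_le (bound := fun _ => C') Filter.univ_mem
    (.of_forall fun t => (hF t).aestronglyMeasurable)
    (.of_bound (hF t₀).aestronglyMeasurable C (.of_forall hFC)) hF'.aestronglyMeasurable
    (.of_forall fun x t _ => hF'C t x) (integrable_const C')
    (.of_forall fun x t _ => hderiv t x)).2

theorem reynolds_transport_graph_general
    (ω : Set (EuclideanSpace ℝ (Fin 2)))
    (hωbdd : Bornology.IsBounded ω)
    (η ηt : ℝ → EuclideanSpace ℝ (Fin 2) → ℝ)
    (g gt : ℝ → EuclideanSpace ℝ (Fin 2) → ℝ → ℝ)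
    (hηcont : Continuous (fun p : ℝ × EuclideanSpace ℝ (Fin 2) => η p.1 p.2))
    (hηtcont : Continuous (fun p : ℝ × EuclideanSpace ℝ (Fin 2) => ηt p.1 p.2))
    (hηderiv : ∀ t x', HasDerivAt (fun s => η s x') (ηt t x') t)
    (hgcont : Continuous (fun p : ℝ × EuclideanSpace ℝ (Fin 2) × ℝ => g p.1 p.2.1 p.2.2))
    (hgtcont : Continuous (fun p : ℝ × EuclideanSpace ℝ (Fin 2) × ℝ => gt p.1 p.2.1 p.2.2))
    (hgderiv : ∀ t x' z, HasDerivAt (fun s => g s x' z) (gt t x' z) t)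
    (Cη Cηt Cg Cgt : ℝ)
    (hηbdd : ∀ t x', |η t x'| ≤ Cη)
    (hηtbdd : ∀ t x', |ηt t x'| ≤ Cηt)
    (hgbdd : ∀ t x' z, |g t x' z| ≤ Cg)
    (hgtbdd : ∀ t x' z, |gt t x' z| ≤ Cgt)
    (F : ℝ → ℝ)
    (hF : ∀ t, F t = ∫ x' in ω, ∫ z in (0 : ℝ)..(η t x'), g t x' z) :
    ∀ t, HasDerivAt F
      ((∫ x' in ω, ∫ z in (0 : ℝ)..(η t x'), gt t x' z)
        + ∫ x' in ω, ηt t x' * g t x' (η t x')) t := by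
  intro t₀
  have : IsFiniteMeasure (volume.restrict ω) :=
    isFiniteMeasure_restrict.2 hωbdd.measure_lt_top.ne
  have inner_cont {h : ℝ → EuclideanSpace ℝ (Fin 2) → ℝ → ℝ}
      (hh : Continuous fun p : ℝ × EuclideanSpace ℝ (Fin 2) × ℝ => h p.1 p.2.1 p.2.2) (t : ℝ) :
      Continuous fun x' => ∫ z in (0 : ℝ)..η t x', h t x' z :=
    intervalIntegral.continuous_parametric_intervalIntegral_of_continuous
      (f := fun x' z => h t x' z) (hh.comp (.prodMk_right t) :) (hηcont.comp (.prodMk_right t))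
  have boundary_cont : Continuous fun x' => ηt t₀ x' * g t₀ x' (η t₀ x') :=
    (hηtcont.comp (.prodMk_right t₀)).mul
      (hgcont.comp (by fun_prop : Continuous fun x' => (t₀, x', η t₀ x')))
  have boundary_bdd (t x') : ‖ηt t x' * g t x' (η t x')‖ ≤ Cηt * Cg := by
    rw [norm_mul]
    exact mul_le_mul (hηtbdd t x') (hgbdd t x' _) (norm_nonneg _)
      ((abs_nonneg _).trans (hηtbdd t x'))
  have inner_deriv (t x') :=
    have hx' : Continuous fun p : ℝ × ℝ => (p.1, x', p.2) := by fun_prop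
    (hηderiv t x').intervalIntegral_upper_of_continuous_deriv (f := fun s z => g s x' z)
      (hgcont.comp hx' :) (hgtcont.comp hx' :) (fun s z => hgderiv s x' z) 0
  rw [funext hF, ← integral_add
    (.of_bound (inner_cont hgtcont t₀).aestronglyMeasurable (Cgt * Cη)
      (.of_forall fun x' => norm_intervalIntegral_zero_le (hgtbdd t₀ x') (hηbdd t₀ x')))
    (.of_bound boundary_cont.aestronglyMeasurable _ (.of_forall (boundary_bdd t₀)))]
  exact hasDerivAt_integral_of_continuous_of_bounded _ (inner_cont hgcont)
    ((inner_cont hgtcont t₀).add boundary_cont)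
    (fun x' => norm_intervalIntegral_zero_le (hgbdd t₀ x') (hηbdd t₀ x'))
    (fun t x' => (norm_add_le _ _).trans (add_le_add
      (norm_intervalIntegral_zero_le (hgtbdd t x') (hηbdd t x')) (boundary_bdd t x')))
    inner_deriv

/-- Reynolds' transport theorem for a region bounded by the moving graph
`z = η(t, x')`: the function `F(t) = ∫_ω ∫_0^{η(t,x')} g(t,x',z) dz dx'` is
differentiable and
`F'(t) = ∫_ω ∫_0^{η(t,x')} ∂_t g dz dx' + ∫_ω ∂_t η(t,x') g(t,x',η(t,x')) dx'`. -/
theorem reynolds_transport_graph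
    (ω : Set (EuclideanSpace ℝ (Fin 2))) (hωmeas : MeasurableSet ω)
    (hωbdd : Bornology.IsBounded ω)
    (η ηt : ℝ → EuclideanSpace ℝ (Fin 2) → ℝ)
    (g gt : ℝ → EuclideanSpace ℝ (Fin 2) → ℝ → ℝ)
    (hηcont : Continuous (fun p : ℝ × EuclideanSpace ℝ (Fin 2) => η p.1 p.2))
    (hηtcont : Continuous (fun p : ℝ × EuclideanSpace ℝ (Fin 2) => ηt p.1 p.2))
    (hηderiv : ∀ t x', HasDerivAt (fun s => η s x') (ηt t x') t)
    (hgcont : Continuous (fun p : ℝ × EuclideanSpace ℝ (Fin 2) × ℝ => g p.1 p.2.1 p.2.2))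
    (hgtcont : Continuous (fun p : ℝ × EuclideanSpace ℝ (Fin 2) × ℝ => gt p.1 p.2.1 p.2.2))
    (hgderiv : ∀ t x' z, HasDerivAt (fun s => g s x' z) (gt t x' z) t)
    (Cη Cηt Cg Cgt : ℝ)
    (hηbdd : ∀ t x', |η t x'| ≤ Cη)
    (hηtbdd : ∀ t x', |ηt t x'| ≤ Cηt)
    (hgbdd : ∀ t x' z, |g t x' z| ≤ Cg)
    (hgtbdd : ∀ t x' z, |gt t x' z| ≤ Cgt)
    (F : ℝ → ℝ)
    (hF : ∀ t, F t = ∫ x' in ω, ∫ z in (0 : ℝ)..(η t x'), g t x' z) :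
    ∀ t, HasDerivAt F
      ((∫ x' in ω, ∫ z in (0 : ℝ)..(η t x'), gt t x' z)
        + ∫ x' in ω, ηt t x' * g t x' (η t x')) t :=
  reynolds_transport_graph_general ω hωbdd η ηt g gt hηcont hηtcont hηderiv hgcont hgtcont hgderiv
    Cη Cηt Cg Cgt hηbdd hηtbdd hgbdd hgtbdd F hF
end

section
/- Let n ≥ 1 and let ψ : ℝⁿ → ℝⁿ be of class C². For x ∈ ℝⁿ let Dψ(x) denote the Jacobian matrix, (Dψ(x))_{ij} = ∂ψⁱ/∂x_j (x), and let adj(Dψ(x)) denote its adjugate matrix. Then the columns of the adjugate field are divergence-free: for every j ∈ {1,…,n} and every x ∈ ℝⁿ, Σ_{i=1}^{n} ∂/∂x_i [ (adj(Dψ))_{ij} ](x) = 0. -/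
/-!
If `ψ` is `C²`, the rows of `Dψ` are gradients, so `∂ᵢ (Dψ)ₖₗ = ∂ᵢ ∂ₗ ψₖ` is symmetric in `i, l`.
Write `adj(Dψ)ᵢⱼ` as the determinant of `Dψ` with row `j` replaced by `eᵢ` and differentiate it
row by row (Jacobi's formula). The term for row `k ≠ j` expands as `Σₗ ∂ᵢ∂ₗψₖ · Bₖ(eᵢ, eₗ)`, where
`Bₖ(u, w)` is the determinant with `u` in row `j` and `w` in row `k`. Since `Bₖ` is alternating and
the second derivatives are symmetric, summing over `i` cancels everything.
-/

open Finset

theorem sum_sum_mul_eq_zero_of_symm_of_antisymm {ι R : Type*} [Fintype ι] [CommRing R]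
    [IsAddTorsionFree R] (S B : ι → ι → R) (hS : ∀ i l, S i l = S l i)
    (hB : ∀ i l, B i l = -B l i) :
    ∑ i, ∑ l, S i l * B i l = 0 := by
  refine self_eq_neg.mp ?_
  calc ∑ i, ∑ l, S i l * B i l = ∑ l, ∑ i, S i l * B i l := sum_comm
    _ = ∑ l, ∑ i, -(S l i * B l i) :=
        sum_congr rfl fun l _ => sum_congr rfl fun i _ => by rw [hS, hB, mul_neg]
    _ = -∑ i, ∑ l, S i l * B i l := by simp only [sum_neg_distrib]

theorem fderiv_fderiv_apply_comm {𝕜 E F G : Type*} [RCLike 𝕜] [NormedAddCommGroup E]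
    [NormedSpace 𝕜 E] [NormedAddCommGroup F] [NormedSpace 𝕜 F] [NormedAddCommGroup G]
    [NormedSpace 𝕜 G] {f : E → F} {x : E} (hf : ContDiffAt 𝕜 2 f x) (L : F →L[𝕜] G) (v w : E) :
    fderiv 𝕜 (fun y => L (fderiv 𝕜 f y w)) x v = fderiv 𝕜 (fun y => L (fderiv 𝕜 f y v)) x w := by
  have hf' : DifferentiableAt 𝕜 (fderiv 𝕜 f) x :=
    (hf.fderiv_right (m := 1) le_rfl).differentiableAt one_ne_zero
  have hL (u u' : E) :
      fderiv 𝕜 (fun y => L (fderiv 𝕜 f y u')) x u = L (fderiv 𝕜 (fderiv 𝕜 f) x u u') := by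
    rw [fderiv_fun_comp x L.differentiableAt (hf'.clm_apply (differentiableAt_const u')),
      fderiv_clm_apply hf' (differentiableAt_const u')]
    simp
  rw [hL, hL, hf.isSymmSndFDerivAt (by simp) v w]

namespace Matrix

section Algebra

variable {ι R : Type*} [Fintype ι] [DecidableEq ι] [CommRing R]

theorem det_updateRow_updateRow_comm (A : Matrix ι ι R) {j k : ι} (hkj : k ≠ j) (u v : ι → R) :
    ((A.updateRow j u).updateRow k v).det = -((A.updateRow j v).updateRow k u).det := by
  have hswap : ((A.updateRow j v).updateRow k u).submatrix (Equiv.swap j k) id =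
      (A.updateRow j u).updateRow k v := by
    ext r c
    simp only [submatrix_apply, updateRow_apply, Equiv.swap_apply_def, id]
    split_ifs <;> simp_all
  rw [← hswap, det_permute, Equiv.Perm.sign_swap hkj.symm]
  simp

theorem det_updateRow_eq_sum_mul_det_updateRow_single (A : Matrix ι ι R) (k : ι) (r : ι → R) :
    (A.updateRow k r).det = ∑ l, r l * (A.updateRow k (Pi.single l 1)).det := by
  calc (A.updateRow k r).det = ∑ l, (A.updateRow k (r l • Pi.single l 1)).det := by
        conv_lhs => rw [pi_eq_sum_univ' r]
        exact (detRowAlternating : (ι → R) [⋀^ι]→ₗ[R] R).map_update_sum univ k _ A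
    _ = _ := by simp only [det_updateRow_smul]

theorem sum_det_updateRow_updateRow_single_eq_zero [IsAddTorsionFree R] (A : Matrix ι ι R)
    {j k : ι} (hkj : k ≠ j) (S : ι → ι → R) (hS : ∀ i l, S i l = S l i) :
    ∑ i, ((A.updateRow j (Pi.single i 1)).updateRow k (S i)).det = 0 := by
  rw [sum_congr rfl fun i _ => det_updateRow_eq_sum_mul_det_updateRow_single _ k (S i)]
  exact sum_sum_mul_eq_zero_of_symm_of_antisymm S _ hS fun i l =>
    det_updateRow_updateRow_comm A hkj _ _

end Algebra

section Calculus

variable {ι 𝕜 E : Type*} [Fintype ι] [DecidableEq ι] [NontriviallyNormedField 𝕜]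
  [NormedAddCommGroup E] [NormedSpace 𝕜 E]

variable (ι 𝕜) in
def detRowMultilinear : ContinuousMultilinearMap 𝕜 (fun _ : ι => ι → 𝕜) 𝕜 where
  toMultilinearMap := (detRowAlternating : (ι → 𝕜) [⋀^ι]→ₗ[𝕜] 𝕜).toMultilinearMap
  cont := continuous_id.matrix_det

theorem fderiv_det_apply {M : E → Matrix ι ι 𝕜} {x : E}
    (hM : ∀ k l, DifferentiableAt 𝕜 (fun y => M y k l) x) (v : E) :
    fderiv 𝕜 (fun y => (M y).det) x v =
      ∑ k, ((M x).updateRow k fun l => fderiv 𝕜 (fun y => M y k l) x v).det := by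
  have hrow (k : ι) : HasFDerivAt (fun y l => M y k l)
      (ContinuousLinearMap.pi fun l => fderiv 𝕜 (fun y => M y k l) x) x :=
    hasFDerivAt_pi.2 fun l => (hM k l).hasFDerivAt
  have hdet : HasFDerivAt (fun y => (M y).det)
      (∑ k, ((detRowMultilinear ι 𝕜).toContinuousLinearMap (fun k l => M x k l) k).comp
        (ContinuousLinearMap.pi fun l => fderiv 𝕜 (fun y => M y k l) x)) x :=
    HasFDerivAt.multilinear_comp (detRowMultilinear ι 𝕜) hrow
  rw [hdet.fderiv]
  simp only [_root_.sum_apply, ContinuousLinearMap.comp_apply,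
    ContinuousMultilinearMap.toContinuousLinearMap_apply]
  rfl

theorem fderiv_adjugate_apply {M : E → Matrix ι ι 𝕜} {x : E}
    (hM : ∀ k l, DifferentiableAt 𝕜 (fun y => M y k l) x) (i j : ι) (v : E) :
    fderiv 𝕜 (fun y => (M y).adjugate i j) x v =
      ∑ k ∈ univ.erase j, (((M x).updateRow j (Pi.single i 1)).updateRow k
        fun l => fderiv 𝕜 (fun y => M y k l) x v).det := by
  have hM' (k l : ι) :
      DifferentiableAt 𝕜 (fun y => (M y).updateRow j (Pi.single i 1) k l) x := by
    by_cases hkj : k = j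
    · simp only [hkj, updateRow_self, differentiableAt_const]
    · simpa only [updateRow_ne hkj] using hM k l
  simp only [adjugate_apply]
  rw [fderiv_det_apply hM', ← add_sum_erase _ _ (mem_univ j)]
  simp only [updateRow_self, fderiv_const_apply, _root_.zero_apply]
  rw [det_eq_zero_of_row_eq_zero j fun l => by simp, zero_add]
  refine sum_congr rfl fun k hk => ?_
  simp only [updateRow_ne (ne_of_mem_erase hk)]

theorem sum_fderiv_adjugate_eq_zero [IsAddTorsionFree 𝕜] {M : E → Matrix ι ι 𝕜} {x : E}
    (e : ι → E) (hM : ∀ k l, DifferentiableAt 𝕜 (fun y => M y k l) x)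
    (hcurl : ∀ k i l,
      fderiv 𝕜 (fun y => M y k l) x (e i) = fderiv 𝕜 (fun y => M y k i) x (e l)) (j : ι) :
    ∑ i, fderiv 𝕜 (fun y => (M y).adjugate i j) x (e i) = 0 := by
  simp only [fderiv_adjugate_apply hM]
  rw [sum_comm]
  exact sum_eq_zero fun k hk => sum_det_updateRow_updateRow_single_eq_zero (M x)
    (ne_of_mem_erase hk) (fun i l => fderiv 𝕜 (fun y => M y k l) x (e i)) (hcurl k)

end Calculus

end Matrix

theorem piola_identity_general
    (n : ℕ)
    (ψ : EuclideanSpace ℝ (Fin n) → EuclideanSpace ℝ (Fin n))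
    (hψ : ContDiff ℝ 2 ψ)
    (J : EuclideanSpace ℝ (Fin n) → Matrix (Fin n) (Fin n) ℝ)
    (hJ : ∀ x i j, J x i j = fderiv ℝ ψ x (EuclideanSpace.single j 1) i) :
    ∀ (j : Fin n) (x : EuclideanSpace ℝ (Fin n)),
      ∑ i : Fin n, fderiv ℝ (fun y => (J y).adjugate i j) x (EuclideanSpace.single i 1)
        = 0 := by
  intro j x
  have hJ_coord (k l : Fin n) : (fun y => J y k l) =
      fun y => EuclideanSpace.proj k (fderiv ℝ ψ y (EuclideanSpace.single l 1)) :=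
    funext fun y => hJ y k l
  have hψx : ContDiffAt ℝ 2 ψ x := hψ.contDiffAt
  have hDψ : DifferentiableAt ℝ (fderiv ℝ ψ) x :=
    (hψx.fderiv_right (m := 1) le_rfl).differentiableAt one_ne_zero
  refine Matrix.sum_fderiv_adjugate_eq_zero _ (fun k l => ?_) (fun k i l => ?_) j
  · rw [hJ_coord]
    fun_prop
  · rw [hJ_coord, hJ_coord]
    exact fderiv_fderiv_apply_comm hψx _ _ _

/-- The Piola identity: for a `C²` map `ψ : ℝⁿ → ℝⁿ` with Jacobian matrix `J`, the
columns of the adjugate field `x ↦ adj(Dψ(x))` are divergence free: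
`Σᵢ ∂/∂xᵢ (adj Dψ)_{ij} = 0` for every `j`. -/
theorem piola_identity
    (n : ℕ) (hn : 1 ≤ n)
    (ψ : EuclideanSpace ℝ (Fin n) → EuclideanSpace ℝ (Fin n))
    (hψ : ContDiff ℝ 2 ψ)
    (J : EuclideanSpace ℝ (Fin n) → Matrix (Fin n) (Fin n) ℝ)
    (hJ : ∀ x i j, J x i j = fderiv ℝ ψ x (EuclideanSpace.single j 1) i) :
    ∀ (j : Fin n) (x : EuclideanSpace ℝ (Fin n)),
      ∑ i : Fin n, fderiv ℝ (fun y => (J y).adjugate i j) x (EuclideanSpace.single i 1)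
        = 0 :=
  piola_identity_general n ψ hψ J hJ
end
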